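/- Let w ∈ ℚ⟦s⟧, let k be a positive integer and μ ∈ ℚ. In the ring of formal power series in z over ℚ⟦s⟧, define u = Σ_{j≥1} (1/j!) · (∂_s^j w) · k^j · w^{j-1} · z^{k·j} (the formal expansion of w(s + k·w(s)·z^k)/w(s) - 1; note each term contains the factor w^{j-1}, so no division is needed), and define φ = Σ_{n≥0} binom(μ,n) · u^n (the formal binomial series (1+u)^μ, well defined since u has zero constant term in z). Then φ satisfies the partial differential equation (1/k + z^k·(∂_s w)) · (z∂_z φ) = k·z^k·w·(∂_s φ) + μ·k·z^k·(∂_s w)·φ, together with the initial condition φ|_{z=0} = 1. (This says that φ̄_m(z,s) = (w(s + k·w(s)·z^k)/w(s))^{m/k}, with m = μ·k, solves the characterizing PDE of the dequantised conjugated current for fixed leakiness k.) -/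

import Mathlib

open Finset

/-- The generalized binomial coefficient `binom(α, n) = α(α-1)⋯(α-n+1)/n!`. -/
noncomputable def qbinom (α : ℚ) (n : ℕ) : ℚ :=
  (∏ i ∈ Finset.range n, (α - i)) / Nat.factorial n

/-- `u = Σ_{j≥1} (1/j!)·(∂_s^j w)·k^j·w^{j-1}·z^{k·j}`, the formal expansion of
`w(s + k·w(s)·z^k)/w(s) - 1`, as a power series in `z` over `ℚ⟦s⟧`.  Since
`k ≥ 1`, the coefficient of `z^d` is nonzero only for `d = k·j` with `j ≥ 1`,
in which case `j = d/k`. -/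
noncomputable def uSeries (k : ℕ) (w : PowerSeries ℚ) :
    PowerSeries (PowerSeries ℚ) :=
  PowerSeries.mk fun d =>
    if k ∣ d ∧ d ≠ 0 then
      PowerSeries.C ((1 / (Nat.factorial (d / k)) : ℚ) * (k : ℚ) ^ (d / k)) *
        ((⇑(PowerSeries.derivative ℚ))^[d / k] w) * w ^ (d / k - 1)
    else 0

/-- `φ = Σ_{n≥0} binom(μ,n)·u^n`, the formal binomial series `(1+u)^μ`
(well defined since `u` has zero constant term in `z`). -/
noncomputable def phiSeries (k : ℕ) (w : PowerSeries ℚ) (μ : ℚ) :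
    PowerSeries (PowerSeries ℚ) :=
  PowerSeries.mk fun d =>
    ∑ n ∈ Finset.range (d + 1),
      PowerSeries.C (qbinom μ n) *
        PowerSeries.coeff d ((uSeries k w) ^ n)

/-- The derivative `∂_s` in `s`, applied coefficientwise to a power series in
`z` with coefficients in `ℚ⟦s⟧`. -/
noncomputable def Ds (f : PowerSeries (PowerSeries ℚ)) :
    PowerSeries (PowerSeries ℚ) :=
  PowerSeries.mk fun d =>
    PowerSeries.derivative ℚ (PowerSeries.coeff d f)

/-- The operator `z∂_z`, multiplying the coefficient of `z^n` by `n`. -/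
noncomputable def zDz (f : PowerSeries (PowerSeries ℚ)) :
    PowerSeries (PowerSeries ℚ) :=
  PowerSeries.mk fun d =>
    ((d : ℕ) : PowerSeries ℚ) * PowerSeries.coeff d f

/-!
With `a = 1/k + z^k w'`, `b = k z^k w` and `c = k z^k w'`, the operator `D = a·z∂_z − b·∂_s` is
a derivation of `ℚ⟦s⟧⟦z⟧` that preserves divisibility by every `z^n`. Comparing the coefficients
of `z^(k j)`, which are consecutive Taylor terms of `w(s + k w z^k)`, gives `D u = c (1 + u)`.
By the chain rule `D (P u) = P'(u) D u`, and the partial sums `B_N = Σ_{n ≤ N} binom(μ,n) T^n`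
satisfy `(1 + T) B_N' − μ B_N = −(N+1) binom(μ,N+1) T^N`. As `φ ≡ B_{N+1}(u)` modulo `z^(N+1)`
and `z ∣ u`, the series `D φ − μ c φ` is divisible by every `z^(N+1)`, hence zero.
-/

open PowerSeries

theorem Derivation.self_mul_apply_pow {R A : Type*} [CommSemiring R] [CommRing A] [Algebra R A]
    (D : Derivation R A A) (a : A) (n : ℕ) : a * D (a ^ n) = n * a ^ n * D a := by
  cases n with
  | zero => simp
  | succ n =>
    rw [D.leibniz_pow, Nat.add_sub_cancel, smul_eq_mul, nsmul_eq_mul]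
    ring

namespace PowerSeries

section Derivations

variable {R S : Type*} [CommSemiring R] [CommRing S] [Algebra R S]

noncomputable def derivationMapCoeffs (d : Derivation R S S) : Derivation R S⟦X⟧ S⟦X⟧ :=
  Derivation.mk'
    { toFun := fun f => mk fun n => d (coeff n f)
      map_add' := fun f g => by ext n; simp only [map_add, coeff_mk]
      map_smul' := fun r f => by ext n; simp }
    fun f g => by
      ext n
      simp only [LinearMap.coe_mk, AddHom.coe_mk, smul_eq_mul, map_add, coeff_mk]
      rw [mul_comm g, coeff_mul, coeff_mul, coeff_mul, map_sum, ← Finset.sum_add_distrib]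
      exact Finset.sum_congr rfl fun p _ => by
        rw [Derivation.leibniz, coeff_mk, coeff_mk, smul_eq_mul, smul_eq_mul]; ring

@[simp]
theorem coeff_derivationMapCoeffs (d : Derivation R S S) (f : S⟦X⟧) (n : ℕ) :
    coeff n (derivationMapCoeffs d f) = d (coeff n f) := by
  simp [derivationMapCoeffs]

theorem X_pow_dvd_derivationMapCoeffs (d : Derivation R S S) {n : ℕ} {f : S⟦X⟧}
    (h : X ^ n ∣ f) : X ^ n ∣ derivationMapCoeffs d f := by
  rw [X_pow_dvd_iff] at h ⊢
  intro m hm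
  rw [coeff_derivationMapCoeffs, h m hm, map_zero]

variable (R) in
noncomputable def eulerDerivation : Derivation R S⟦X⟧ S⟦X⟧ :=
  Derivation.mk'
    { toFun := fun f => mk fun n => n • coeff n f
      map_add' := fun f g => by ext n; simp only [map_add, coeff_mk, smul_add]
      map_smul' := fun r f => by ext n; simp }
    fun f g => by
      ext n
      simp only [LinearMap.coe_mk, AddHom.coe_mk, smul_eq_mul, map_add, coeff_mk]
      rw [mul_comm g, coeff_mul, coeff_mul, coeff_mul, Finset.smul_sum, ← Finset.sum_add_distrib]
      refine Finset.sum_congr rfl fun p hp => ?_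
      rw [← mem_antidiagonal.mp hp, coeff_mk, coeff_mk, add_smul]
      simp only [smul_mul_assoc, mul_smul_comm]
      ring

@[simp]
theorem coeff_eulerDerivation (f : S⟦X⟧) (n : ℕ) :
    coeff n (eulerDerivation R f) = n • coeff n f := by
  simp [eulerDerivation]

theorem X_pow_dvd_eulerDerivation {n : ℕ} {f : S⟦X⟧} (h : X ^ n ∣ f) :
    X ^ n ∣ eulerDerivation R f := by
  rw [X_pow_dvd_iff] at h ⊢
  intro m hm
  rw [coeff_eulerDerivation, h m hm, smul_zero]

end Derivations

theorem eq_zero_of_forall_X_pow_dvd {R : Type*} [Semiring R] {f : R⟦X⟧}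
    (h : ∀ n, X ^ n ∣ f) : f = 0 := by
  ext n
  exact X_pow_dvd_iff.mp (h (n + 1)) n n.lt_succ_self

end PowerSeries

theorem Ds_eq_derivationMapCoeffs (f : PowerSeries (PowerSeries ℚ)) :
    Ds f = derivationMapCoeffs (derivative ℚ) f := by
  ext n
  simp [Ds]

theorem zDz_eq_eulerDerivation (f : PowerSeries (PowerSeries ℚ)) :
    zDz f = eulerDerivation ℚ f := by
  ext n : 1
  simp [zDz]

theorem qbinom_zero (α : ℚ) : qbinom α 0 = 1 := by
  simp [qbinom]

theorem succ_mul_qbinom_succ (α : ℚ) (n : ℕ) :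
    ((n : ℚ) + 1) * qbinom α (n + 1) = (α - n) * qbinom α n := by
  have : (n.factorial : ℚ) ≠ 0 := by positivity
  rw [qbinom, qbinom, Finset.prod_range_succ, Nat.factorial_succ]
  push_cast
  field_simp

noncomputable def binomPoly (μ : ℚ) (N : ℕ) : Polynomial ℚ :=
  ∑ n ∈ range (N + 1), Polynomial.C (qbinom μ n) * Polynomial.X ^ n

theorem one_add_X_mul_derivative_binomPoly (μ : ℚ) (N : ℕ) :
    (1 + Polynomial.X) * Polynomial.derivative (binomPoly μ N) - Polynomial.C μ * binomPoly μ N =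
      -Polynomial.C ((N + 1) * qbinom μ (N + 1)) * Polynomial.X ^ N := by
  induction N with
  | zero => simp [binomPoly, qbinom]
  | succ N ih =>
    have hrec := congrArg Polynomial.C (succ_mul_qbinom_succ μ (N + 1))
    rw [binomPoly, Finset.sum_range_succ, ← binomPoly, map_add, Polynomial.derivative_C_mul_X_pow]
    simp only [map_mul, map_add, map_sub, map_natCast, map_one, Nat.cast_add, Nat.cast_one,
      Nat.add_sub_cancel] at ih hrec ⊢
    linear_combination ih + Polynomial.X ^ (N + 1) * hrec

section BinomSeries

variable {A : Type*} [CommRing A] [Algebra ℚ A]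

noncomputable def binomSeries (μ : ℚ) (u : A⟦X⟧) : A⟦X⟧ :=
  mk fun d => ∑ n ∈ range (d + 1), algebraMap ℚ A (qbinom μ n) * coeff d (u ^ n)

theorem constantCoeff_binomSeries (μ : ℚ) (u : A⟦X⟧) :
    constantCoeff (binomSeries μ u) = 1 := by
  rw [← coeff_zero_eq_constantCoeff_apply, binomSeries, coeff_mk, Finset.sum_range_one, pow_zero,
    coeff_one, if_pos rfl, qbinom_zero, map_one, mul_one]

theorem coeff_aeval_binomPoly (μ : ℚ) (u : A⟦X⟧) (M d : ℕ) :
    coeff d (Polynomial.aeval u (binomPoly μ M)) =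
      ∑ n ∈ range (M + 1), algebraMap ℚ A (qbinom μ n) * coeff d (u ^ n) := by
  simp only [binomPoly, map_sum, map_mul, Polynomial.aeval_C, map_pow, Polynomial.aeval_X,
    PowerSeries.algebraMap_apply, coeff_C_mul]

theorem X_pow_dvd_binomSeries_sub_aeval_binomPoly (μ : ℚ) {u : A⟦X⟧}
    (hu : constantCoeff u = 0) {N M : ℕ} (hNM : N ≤ M) :
    X ^ (N + 1) ∣ binomSeries μ u - Polynomial.aeval u (binomPoly μ M) := by
  rw [X_pow_dvd_iff]
  intro d hd
  rw [map_sub, coeff_aeval_binomPoly, binomSeries, coeff_mk, sub_eq_zero]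
  refine Finset.sum_subset (range_subset_range.mpr (by omega)) fun n _ hnd => ?_
  have hXn : X ^ n ∣ u ^ n := pow_dvd_pow_of_dvd (X_dvd_iff.mpr hu) n
  rw [Finset.mem_range, not_lt] at hnd
  rw [X_pow_dvd_iff.mp hXn d (by omega), mul_zero]

theorem Derivation.apply_aeval_binomPoly (D : Derivation ℚ A⟦X⟧ A⟦X⟧) {u c : A⟦X⟧}
    (hDu : D u = c * (1 + u)) (μ : ℚ) (M : ℕ) :
    D (Polynomial.aeval u (binomPoly μ M)) - μ • (c * Polynomial.aeval u (binomPoly μ M)) =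
      -(((M : ℚ) + 1) * qbinom μ (M + 1)) • (c * u ^ M) := by
  have h := congrArg (Polynomial.aeval u) (one_add_X_mul_derivative_binomPoly μ M)
  simp only [map_sub, map_mul, map_add, map_one, map_neg, map_pow, Polynomial.aeval_X,
    Polynomial.aeval_C] at h
  rw [Derivation.map_aeval, hDu, smul_eq_mul, Algebra.smul_def, Algebra.smul_def, map_neg,
    map_mul, map_add, map_one]
  linear_combination c * h

theorem Derivation.apply_binomSeries (D : Derivation ℚ A⟦X⟧ A⟦X⟧)
    (hD : ∀ n f, X ^ n ∣ f → X ^ n ∣ D f) {u c : A⟦X⟧} (hu : constantCoeff u = 0)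
    (hDu : D u = c * (1 + u)) (μ : ℚ) :
    D (binomSeries μ u) = μ • (c * binomSeries μ u) := by
  rw [← sub_eq_zero]
  refine eq_zero_of_forall_X_pow_dvd fun N => ?_
  obtain _ | N := N
  · simp
  set T := Polynomial.aeval u (binomPoly μ (N + 1))
  have hT : X ^ (N + 1) ∣ binomSeries μ u - T :=
    X_pow_dvd_binomSeries_sub_aeval_binomPoly μ hu N.le_succ
  have hXu : X ^ (N + 1) ∣ u ^ (N + 1) := pow_dvd_pow_of_dvd (X_dvd_iff.mpr hu) _
  have key : D (binomSeries μ u) - μ • (c * binomSeries μ u) =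
      (D (binomSeries μ u - T) - μ • (c * (binomSeries μ u - T))) +
        -(((N + 1 : ℕ) + 1) * qbinom μ (N + 1 + 1)) • (c * u ^ (N + 1)) := by
    rw [← D.apply_aeval_binomPoly hDu]
    simp only [map_sub, mul_sub, smul_sub]
    abel
  rw [key]
  refine dvd_add (dvd_sub (hD _ _ hT) ?_) ?_
  · rw [Algebra.smul_def]
    exact (hT.mul_left c).mul_left _
  · rw [Algebra.smul_def]
    exact (hXu.mul_left c).mul_left _

end BinomSeries

section uSeries

variable (w : PowerSeries ℚ)

noncomputable def uSeriesCoeff (k j : ℕ) : PowerSeries ℚ :=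
  C ((1 / (Nat.factorial j) : ℚ) * (k : ℚ) ^ j) * ((⇑(derivative ℚ))^[j] w) * w ^ (j - 1)

theorem coeff_uSeries_of_not_dvd {k d : ℕ} (h : ¬k ∣ d) : coeff d (uSeries k w) = 0 := by
  simp [uSeries, h]

theorem constantCoeff_uSeries (k : ℕ) : constantCoeff (uSeries k w) = 0 := by
  simp [uSeries, ← coeff_zero_eq_constantCoeff_apply]

theorem coeff_uSeries_mul {k : ℕ} (hk : 0 < k) {j : ℕ} (hj : j ≠ 0) :
    coeff (k * j) (uSeries k w) = uSeriesCoeff w k j := by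
  simp [uSeries, uSeriesCoeff, hj, hk.ne', Nat.mul_div_cancel_left j hk]

theorem uSeriesCoeff_one (k : ℕ) : uSeriesCoeff w k 1 = k * derivative ℚ w := by
  simp [uSeriesCoeff]

theorem uSeriesCoeff_succ_succ (k j : ℕ) :
    ((j : PowerSeries ℚ) + 2) * uSeriesCoeff w k (j + 2) =
      k * (w * derivative ℚ (uSeriesCoeff w k (j + 1)) -
        j * derivative ℚ w * uSeriesCoeff w k (j + 1)) := by
  set W := (⇑(derivative ℚ))^[j + 1] w
  have hW : (⇑(derivative ℚ))^[j + 2] w = derivative ℚ W := Function.iterate_succ_apply' _ _ _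
  have hfac : ((j + 2).factorial : ℚ) = (j + 2) * (j + 1).factorial := by
    push_cast [Nat.factorial_succ]
    ring
  have hscal : ((j : PowerSeries ℚ) + 2) * C (1 / ((j + 2).factorial : ℚ) * (k : ℚ) ^ (j + 2)) =
      k * C (1 / ((j + 1).factorial : ℚ) * (k : ℚ) ^ (j + 1)) := by
    rw [← map_natCast C k, ← map_natCast C j, ← map_ofNat C 2, ← map_add, ← map_mul, ← map_mul,
      hfac]
    congr 1
    field_simp
    ring
  simp only [uSeriesCoeff, hW, Derivation.leibniz, derivative_C, smul_eq_mul, mul_zero, add_zero,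
    Nat.add_sub_cancel, show j + 2 - 1 = j + 1 from rfl]
  linear_combination (derivative ℚ W * w ^ (j + 1)) * hscal -
    k * C (1 / ((j + 1).factorial : ℚ) * (k : ℚ) ^ (j + 1)) * W *
      (derivative ℚ).self_mul_apply_pow w j

theorem coeff_uSeries_add {k : ℕ} (hk : 0 < k) (e : ℕ) :
    C (1 / (k : ℚ)) * ((k + e : ℕ) : PowerSeries ℚ) * coeff (k + e) (uSeries k w) +
        derivative ℚ w * (e : PowerSeries ℚ) * coeff e (uSeries k w) =
      k * (w * derivative ℚ (coeff e (uSeries k w)) +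
        derivative ℚ w * (coeff e 1 + coeff e (uSeries k w))) := by
  have hk1 : C (1 / (k : ℚ)) * (k : PowerSeries ℚ) = 1 := by
    rw [← map_natCast C, ← map_mul, one_div_mul_cancel (by positivity), map_one]
  by_cases hdvd : k ∣ e
  · obtain ⟨j, rfl⟩ := hdvd
    rw [show k + k * j = k * (j + 1) by ring]
    cases j with
    | zero =>
      have hu1 := coeff_uSeries_mul w hk one_ne_zero
      rw [mul_one, uSeriesCoeff_one] at hu1
      simp only [zero_add, mul_zero, mul_one, hu1, coeff_zero_eq_constantCoeff_apply,
        constantCoeff_uSeries, map_one, map_zero, Nat.cast_zero, add_zero]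
      linear_combination (k * derivative ℚ w) * hk1
    | succ i =>
      rw [coeff_uSeries_mul w hk (by omega), coeff_uSeries_mul w hk (by omega), coeff_one,
        if_neg (by positivity)]
      push_cast
      linear_combination uSeriesCoeff_succ_succ w k i +
        (((i : PowerSeries ℚ) + 2) * uSeriesCoeff w k (i + 2)) * hk1
  · have he : e ≠ 0 := by
      rintro rfl
      exact hdvd (dvd_zero k)
    have hke : ¬k ∣ k + e := fun h => hdvd ((Nat.dvd_add_right dvd_rfl).mp h)
    rw [coeff_uSeries_of_not_dvd w hdvd, coeff_uSeries_of_not_dvd w hke, coeff_one, if_neg he]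
    simp

end uSeries

theorem phiSeries_eq_binomSeries (k : ℕ) (w : PowerSeries ℚ) (μ : ℚ) :
    phiSeries k w μ = binomSeries μ (uSeries k w) :=
  rfl

noncomputable def transportDerivation (k : ℕ) (w : PowerSeries ℚ) :
    Derivation ℚ (PowerSeries (PowerSeries ℚ)) (PowerSeries (PowerSeries ℚ)) :=
  (C (C (1 / (k : ℚ))) + X ^ k * C (derivative ℚ w)) • eulerDerivation ℚ -
    (C (C (k : ℚ)) * X ^ k * C w) • derivationMapCoeffs (derivative ℚ)

theorem transportDerivation_apply (k : ℕ) (w : PowerSeries ℚ) (f : PowerSeries (PowerSeries ℚ)) :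
    transportDerivation k w f =
      (C (C (1 / (k : ℚ))) + X ^ k * C (derivative ℚ w)) * zDz f -
        C (C (k : ℚ)) * X ^ k * C w * Ds f := by
  simp [transportDerivation, zDz_eq_eulerDerivation, Ds_eq_derivationMapCoeffs]

theorem X_pow_dvd_transportDerivation (k : ℕ) (w : PowerSeries ℚ) (n : ℕ)
    (f : PowerSeries (PowerSeries ℚ)) (h : X ^ n ∣ f) : X ^ n ∣ transportDerivation k w f := by
  rw [transportDerivation_apply, zDz_eq_eulerDerivation, Ds_eq_derivationMapCoeffs]
  exact dvd_sub ((X_pow_dvd_eulerDerivation h).mul_left _)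
    ((X_pow_dvd_derivationMapCoeffs _ h).mul_left _)

theorem transportDerivation_uSeries {k : ℕ} (hk : 0 < k) (w : PowerSeries ℚ) :
    transportDerivation k w (uSeries k w) =
      C (C (k : ℚ)) * X ^ k * C (derivative ℚ w) * (1 + uSeries k w) := by
  rw [transportDerivation_apply, sub_eq_iff_eq_add']
  have hL : (C (C (1 / (k : ℚ))) + X ^ k * C (derivative ℚ w)) * zDz (uSeries k w) =
      C (C (1 / (k : ℚ))) * zDz (uSeries k w) +
        X ^ k * (C (derivative ℚ w) * zDz (uSeries k w)) := by
    ring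
  have hR : C (C (k : ℚ)) * X ^ k * C w * Ds (uSeries k w) +
        C (C (k : ℚ)) * X ^ k * C (derivative ℚ w) * (1 + uSeries k w) =
      X ^ k * (C (k : PowerSeries ℚ) *
        (C w * Ds (uSeries k w) + C (derivative ℚ w) * (1 + uSeries k w))) := by
    simp only [map_natCast]
    ring
  refine PowerSeries.ext fun d => ?_
  rw [hL, hR, map_add, coeff_C_mul, coeff_X_pow_mul', coeff_X_pow_mul']
  split_ifs with hkd
  · obtain ⟨e, rfl⟩ := Nat.exists_eq_add_of_le hkd
    simp only [Nat.add_sub_cancel_left, coeff_C_mul, map_add, zDz_eq_eulerDerivation,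
      coeff_eulerDerivation, nsmul_eq_mul, Ds_eq_derivationMapCoeffs, coeff_derivationMapCoeffs]
    linear_combination coeff_uSeries_add w hk e
  · have hd : ¬(k ∣ d ∧ d ≠ 0) := fun ⟨hdvd, hd0⟩ =>
      hkd (Nat.le_of_dvd (Nat.pos_of_ne_zero hd0) hdvd)
    simp [uSeries, zDz, hd]

/-- Let `w ∈ ℚ⟦s⟧`, `k` a positive integer and `μ ∈ ℚ`.
With `u = Σ_{j≥1} (1/j!)·(∂_s^j w)·k^j·w^{j-1}·z^{k·j}` and
`φ = Σ_{n≥0} binom(μ,n)·u^n`, the series `φ` satisfies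
`(1/k + z^k·(∂_s w))·(z∂_z φ) = k·z^k·w·(∂_s φ) + μ·k·z^k·(∂_s w)·φ`
and `φ|_{z=0} = 1`.  (I.e. `φ̄_m(z,s) = (w(s+k·w(s)·z^k)/w(s))^{m/k}`, with
`m = μ·k`, solves the characterizing PDE of the dequantised conjugated current
for fixed leakiness `k`.) -/
theorem dequantised_conjugated_current_PDE
    (k : ℕ) (hk : 0 < k) (w : PowerSeries ℚ) (μ : ℚ) :
    ((PowerSeries.C (PowerSeries.C (1 / (k : ℚ))) +
        PowerSeries.X ^ k *
          PowerSeries.C (PowerSeries.derivative ℚ w)) *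
        zDz (phiSeries k w μ) =
      PowerSeries.C (PowerSeries.C (k : ℚ)) * PowerSeries.X ^ k *
          PowerSeries.C w * Ds (phiSeries k w μ) +
        PowerSeries.C (PowerSeries.C (μ * k)) * PowerSeries.X ^ k *
          PowerSeries.C (PowerSeries.derivative ℚ w) *
          phiSeries k w μ) ∧
    PowerSeries.constantCoeff (phiSeries k w μ) = 1 := by
  have hφ := (transportDerivation k w).apply_binomSeries (X_pow_dvd_transportDerivation k w)
    (constantCoeff_uSeries w k) (transportDerivation_uSeries hk w) μ
  refine ⟨?_, constantCoeff_binomSeries μ _⟩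
  rw [transportDerivation_apply, Algebra.smul_def, PowerSeries.algebraMap_apply,
    ← C_eq_algebraMap] at hφ
  rw [phiSeries_eq_binomSeries, mul_comm μ, map_mul, map_mul]
  linear_combination hφ
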